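/- Let G and G' be finite connected simple graphs. Then the partially ordered sets C_G and C_{G'} of connected subgraphs are order-isomorphic (equivalently, homeomorphic with respect to their poset topologies) if and only if the graphs G and G' are isomorphic. -/

import Mathlib

/-!
The minimal elements of `C_G` are the one-vertex subgraphs, and the elements covering the
singleton at `v` are exactly the one-edge subgraphs at `v`. Hence `v` and `w` are adjacent iff
their singletons are distinct and have a common upper cover, so an order isomorphism
`C_G ≃o C_G'` restricts to a bijection of vertices preserving adjacency. Conversely, a graph
isomorphism transports connected subgraphs.
-/

/-- The poset topology on a partially ordered set `P`: the topology generated by the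
principal down-sets `U_x = {y | y ≤ x}`. -/
def posetTopology (P : Type*) [PartialOrder P] : TopologicalSpace P :=
  TopologicalSpace.generateFrom {U : Set P | ∃ x : P, U = {y : P | y ≤ x}}

/-- The collection `C_G` of connected subgraphs of `G`, partially ordered by the subgraph
relation. -/
abbrev ConnSub {V : Type*} (G : SimpleGraph V) := {H : G.Subgraph // H.Connected}

open SimpleGraph

section

variable {V V' : Type*} {G : SimpleGraph V} {G' : SimpleGraph V'}

namespace SimpleGraph

lemma Subgraph.Connected.map_hom (f : G →g G') {H : G.Subgraph} (h : H.Connected) :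
    (H.map f).Connected := by
  rw [Subgraph.connected_iff'] at h ⊢
  refine h.map ⟨fun x : H.verts => ⟨f x, x, x.2, rfl⟩, ?_⟩ ?_
  · rintro ⟨a, ha⟩ ⟨b, hb⟩ hab
    exact ⟨a, b, hab, rfl, rfl⟩
  · rintro ⟨_, u, hu, rfl⟩
    exact ⟨⟨u, hu⟩, rfl⟩

lemma Iso.map_symm_map_subgraph (f : G ≃g G') (H : G.Subgraph) :
    (H.map f.toHom).map f.symm.toHom = H := by
  rw [← Subgraph.map_comp]
  convert Subgraph.map_id H
  ext v
  simp

def Iso.mapSubgraph (f : G ≃g G') : G.Subgraph ≃o G'.Subgraph where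
  toFun := Subgraph.map f.toHom
  invFun := Subgraph.map f.symm.toHom
  left_inv := f.map_symm_map_subgraph
  right_inv := f.symm.map_symm_map_subgraph
  map_rel_iff' {H K} := by
    change H.map f.toHom ≤ K.map f.toHom ↔ H ≤ K
    refine ⟨fun h => ?_, Subgraph.map_mono⟩
    simpa only [f.map_symm_map_subgraph] using Subgraph.map_mono (f := f.symm.toHom) h

end SimpleGraph

namespace ConnSub

def congr (f : G ≃g G') : ConnSub G ≃o ConnSub G' where
  toEquiv := f.mapSubgraph.toEquiv.subtypeEquiv fun H =>
    ⟨Subgraph.Connected.map_hom f.toHom, fun h => by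
      simpa only [f.map_symm_map_subgraph] using
        (show (H.map f.toHom).Connected from h).map_hom f.symm.toHom⟩
  map_rel_iff' := f.mapSubgraph.le_iff_le

variable (G) in
def single (v : V) : ConnSub G :=
  ⟨G.singletonSubgraph v, Subgraph.singletonSubgraph_connected⟩

lemma single_le_iff {v : V} {H : ConnSub G} : single G v ≤ H ↔ v ∈ H.1.verts :=
  singletonSubgraph_le_iff v H.1

lemma eq_single_iff {v : V} {H : ConnSub G} : H = single G v ↔ H.1.verts = {v} :=
  Subtype.ext_iff.trans (eq_singletonSubgraph_iff_verts_eq H.1)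

lemma single_injective : Function.Injective (single G) := fun _ _ h =>
  Set.singleton_injective (eq_single_iff.1 h)

lemma isMin_iff_exists_eq_single {H : ConnSub G} : IsMin H ↔ ∃ v, H = single G v := by
  constructor
  · intro hmin
    obtain ⟨v, hv⟩ := H.2.nonempty
    have hle : single G v ≤ H := single_le_iff.2 hv
    exact ⟨v, (hmin hle).antisymm hle⟩
  · rintro ⟨v, rfl⟩ K hK
    obtain ⟨u, hu⟩ := K.2.nonempty
    have hKv : K.1.verts ⊆ {v} := hK.1
    obtain rfl : u = v := hKv hu
    exact (eq_single_iff.2 (hKv.antisymm (Set.singleton_subset_iff.2 hu))).ge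

lemma exists_adj_of_single_lt {v : V} {H : ConnSub G} (h : single G v < H) :
    ∃ u, H.1.Adj v u := by
  have hv : v ∈ H.1.verts := single_le_iff.1 h.le
  have : Nontrivial H.1.verts := by
    rw [Set.nontrivial_coe_sort, ← Set.not_subsingleton_iff]
    exact fun hs => h.ne' (eq_single_iff.2 (hs.eq_singleton_of_mem hv))
  exact H.2.preconnected.exists_adj_of_nontrivial ⟨v, hv⟩

def ofAdj {v w : V} (h : G.Adj v w) : ConnSub G :=
  ⟨G.subgraphOfAdj h, Subgraph.subgraphOfAdj_connected h⟩

lemma ofAdj_le_of_adj {v w : V} {H : ConnSub G} (h : H.1.Adj v w) :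
    ofAdj (H.1.adj_sub h) ≤ H :=
  subgraphOfAdj_le_of_adj H.1 h

lemma single_covBy_ofAdj {v w : V} (h : G.Adj v w) : single G v ⋖ ofAdj h := by
  have hle : single G v ≤ ofAdj h := single_le_iff.2 (by simp [ofAdj])
  refine ⟨hle.lt_of_ne fun heq => h.ne ?_, fun K hvK hKe => ?_⟩
  · have : w ∈ (single G v).1.verts := heq ▸ (by simp [ofAdj])
    simpa [single] using this.symm
  · obtain ⟨u, hu⟩ := exists_adj_of_single_lt hvK
    have : u ∈ ({v, w} : Set V) := hKe.le.1 (K.1.edge_vert hu.symm)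
    obtain rfl : u = w := this.resolve_left (K.1.adj_sub hu).ne'
    exact (ofAdj_le_of_adj hu).not_gt hKe

lemma exists_eq_ofAdj_of_single_covBy {v : V} {E : ConnSub G} (h : single G v ⋖ E) :
    ∃ u, ∃ huv : G.Adj v u, E = ofAdj huv := by
  obtain ⟨u, hu⟩ := exists_adj_of_single_lt h.lt
  refine ⟨u, E.1.adj_sub hu, ?_⟩
  by_contra hne
  exact h.2 (single_covBy_ofAdj (E.1.adj_sub hu)).lt
    ((ofAdj_le_of_adj hu).lt_of_ne (Ne.symm hne))

lemma adj_iff_exists_covBy {v w : V} :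
    G.Adj v w ↔ single G v ≠ single G w ∧ ∃ E, single G v ⋖ E ∧ single G w ⋖ E := by
  refine ⟨fun h => ⟨single_injective.ne h.ne, ofAdj h, single_covBy_ofAdj h, ?_⟩, ?_⟩
  · convert single_covBy_ofAdj h.symm using 1
    exact Subtype.ext (subgraphOfAdj_symm h).symm
  · rintro ⟨hne, E, hv, hw⟩
    obtain ⟨u, hu, rfl⟩ := exists_eq_ofAdj_of_single_covBy hv
    have : w ∈ ({v, u} : Set V) := single_le_iff.1 hw.le
    obtain rfl : w = u := this.resolve_left fun h => hne (h ▸ rfl)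
    exact hu

variable (G) in
noncomputable def singleEquivIsMin : V ≃ {H : ConnSub G // IsMin H} :=
  Equiv.ofBijective (fun v => ⟨single G v, isMin_iff_exists_eq_single.2 ⟨v, rfl⟩⟩)
    ⟨fun _ _ h => single_injective (congrArg Subtype.val h),
      fun H => (isMin_iff_exists_eq_single.1 H.2).imp fun _ hv => Subtype.ext hv.symm⟩

noncomputable def vertexEquiv (e : ConnSub G ≃o ConnSub G') : V ≃ V' :=
  (singleEquivIsMin G).trans <|
    (e.toEquiv.subtypeEquiv fun _ => e.isMin_apply.symm).trans (singleEquivIsMin G').symm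

lemma single_vertexEquiv (e : ConnSub G ≃o ConnSub G') (v : V) :
    single G' (vertexEquiv e v) = e (single G v) :=
  congrArg Subtype.val ((singleEquivIsMin G').apply_symm_apply _)

noncomputable def graphIso (e : ConnSub G ≃o ConnSub G') : G ≃g G' where
  toEquiv := vertexEquiv e
  map_rel_iff' {_ _} := by
    simp only [adj_iff_exists_covBy, single_vertexEquiv, e.injective.ne_iff,
      e.surjective.exists, apply_covBy_apply_iff]

end ConnSub

end

theorem stmt_16_general {V V' : Type*} (G : SimpleGraph V) (G' : SimpleGraph V') :
    Nonempty (ConnSub G ≃o ConnSub G') ↔ Nonempty (G ≃g G') :=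
  ⟨fun ⟨e⟩ => ⟨ConnSub.graphIso e⟩, fun ⟨f⟩ => ⟨ConnSub.congr f⟩⟩

theorem stmt_16 {V V' : Type*} [Fintype V] [Fintype V'] (G : SimpleGraph V)
    (G' : SimpleGraph V') (hG : G.Connected) (hG' : G'.Connected) :
    Nonempty (ConnSub G ≃o ConnSub G') ↔ Nonempty (G ≃g G') :=
  stmt_16_general G G'
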